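/- arXiv:1406.2811 — 2 statements merged into one kernel-verified Lean document; each statement's English description precedes it below -/
import Mathlib

section
/- Jump gain (saltation) formula for the linearization across a state-triggered jump: Let g : ℝ^n × ℝ → ℝ and Δ : ℝ^n × ℝ → ℝ^n be continuously differentiable. Let xᵃ, xᵖ : (−ε₀,ε₀) × [t₀,t₁] → ℝ^n be continuously differentiable jointly in (ε,t), with nominal trajectories αᵃ(t) = xᵃ(0,t), αᵖ(t) = xᵖ(0,t) and first variations z̄ᵃ(t) = (∂xᵃ/∂ε)(0,t), z̄ᵖ(t) = (∂xᵖ/∂ε)(0,t). Let ε ↦ τ_ε be continuously differentiable with τ₀ = τ, suppose g(xᵃ(ε,τ_ε), τ_ε) = 0 and xᵖ(ε,τ_ε) = xᵃ(ε,τ_ε) + Δ(xᵃ(ε,τ_ε), τ_ε) for all ε near 0, and suppose the transversality condition ġ⁻ := D₁g(αᵃ(τ),τ)·f⁻ + D₂g(αᵃ(τ),τ) ≠ 0 holds, where f⁻ := α̇ᵃ(τ). Then z̄ᵖ(τ) = z̄ᵃ(τ) + H z̄ᵃ(τ), where, with f⁺ := α̇ᵖ(τ), Δ̇⁻ := D₁Δ(αᵃ(τ),τ)·f⁻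 + D₂Δ(αᵃ(τ),τ), the jump gain matrix is H = ( (f⁺ − f⁻ − Δ̇⁻) / ġ⁻ ) D₁g(αᵃ(τ),τ) + D₁Δ(αᵃ(τ),τ). -/
/-!
Differentiate the event condition `g (xᵃ(ε, τ_ε), τ_ε) = 0` and the reset relation at `ε = 0`.
The first determines the sensitivity `τ'` of the event time, `τ' = -D₁g z̄ᵃ / ġ⁻`, which is where
transversality enters. In the second, the time shift contributes `τ' (f⁻ + Δ̇⁻ - f⁺)`, and
substituting `τ'` turns this into the rank-one part of the jump gain.
-/

open Topology

section Partials

variable {𝕜 E G : Type*} [NontriviallyNormedField 𝕜] [NormedAddCommGroup E] [NormedSpace 𝕜 E]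
  [NormedAddCommGroup G] [NormedSpace 𝕜 G]

theorem ContinuousLinearMap.apply_prod_eq_add_smul (L : E × 𝕜 →L[𝕜] G) (v : E) (s : 𝕜) :
    L (v, s) = L (v, 0) + s • L (0, 1) := by
  rw [← map_smul, ← map_add, Prod.smul_mk, smul_zero, smul_eq_mul, mul_one, Prod.mk_add_mk,
    add_zero, zero_add]

variable {f : E × 𝕜 → G} {x : E} {t : 𝕜}

theorem DifferentiableAt.fderiv_comp_prodMk_left_apply (hf : DifferentiableAt 𝕜 f (x, t))
    (v : E) : fderiv 𝕜 (fun y => f (y, t)) x v = fderiv 𝕜 f (x, t) (v, 0) := by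
  have h : HasFDerivAt (fun y => f (y, t)) ((fderiv 𝕜 f (x, t)).comp (.inl 𝕜 E 𝕜)) x :=
    hf.hasFDerivAt.comp x (hasFDerivAt_prodMk_left x t)
  rw [h.fderiv]
  rfl

theorem DifferentiableAt.deriv_comp_prodMk_right (hf : DifferentiableAt 𝕜 f (x, t)) :
    deriv (fun s => f (x, s)) t = fderiv 𝕜 f (x, t) (0, 1) :=
  (hf.hasFDerivAt.comp_hasDerivAt t ((hasDerivAt_const t x).prodMk (hasDerivAt_id t))).deriv

theorem DifferentiableAt.fderiv_apply_eq_partials (hf : DifferentiableAt 𝕜 f (x, t)) (v : E)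
    (s : 𝕜) :
    fderiv 𝕜 f (x, t) (v, s) =
      fderiv 𝕜 (fun y => f (y, t)) x v + s • deriv (fun s => f (x, s)) t := by
  rw [hf.fderiv_comp_prodMk_left_apply, hf.deriv_comp_prodMk_right,
    ContinuousLinearMap.apply_prod_eq_add_smul]

theorem DifferentiableAt.hasDerivAt_comp_prodMk {c : 𝕜 → E} {T : 𝕜 → 𝕜} {c' : E} {T' t₀ : 𝕜}
    (hf : DifferentiableAt 𝕜 f (c t₀, T t₀)) (hc : HasDerivAt c c' t₀) (hT : HasDerivAt T T' t₀) :
    HasDerivAt (fun t => f (c t, T t)) (fderiv 𝕜 f (c t₀, T t₀) (c', T')) t₀ :=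
  hf.hasFDerivAt.comp_hasDerivAt t₀ (hc.prodMk hT)

end Partials

section JumpGain

variable {𝕜 V : Type*} [Field 𝕜] [AddCommGroup V] [Module 𝕜 V]

theorem eq_add_jump_of_guard_of_reset {gdot T' a : 𝕜} {za zp fm fp Δdot b : V}
    (htrans : gdot ≠ 0) (hguard : a + T' * gdot = 0)
    (hreset : zp + T' • fp = za + T' • fm + b + T' • Δdot) :
    zp = za + (gdot⁻¹ • a • (fp - fm - Δdot) + b) := by
  have hT' : T' = -gdot⁻¹ * a := by
    field_simp
    linear_combination hguard
  rw [eq_sub_of_add_eq hreset, hT']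
  module

end JumpGain

/-- Jump gain (saltation) formula for the linearization across a
state-triggered jump: `z̄ᵖ(τ) = z̄ᵃ(τ) + H z̄ᵃ(τ)` with
`H = ((f⁺ − f⁻ − Δ̇⁻)/ġ⁻) D₁g + D₁Δ`. Here `f⁻ = α̇ᵃ(τ)`, `f⁺ = α̇ᵖ(τ)`,
`z̄ᵃ(τ) = ∂xᵃ/∂ε (0,τ)`, `z̄ᵖ(τ) = ∂xᵖ/∂ε (0,τ)`, and `H` is realized as the
continuous linear map `w ↦ ġ⁻⁻¹ • (D₁g w) • (f⁺ − f⁻ − Δ̇⁻) + D₁Δ w`. -/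
theorem jump_gain_formula
    (n : ℕ) (g : (Fin n → ℝ) × ℝ → ℝ) (Δ : (Fin n → ℝ) × ℝ → Fin n → ℝ)
    (xa xp : ℝ × ℝ → Fin n → ℝ) (τ : ℝ) (T : ℝ → ℝ)
    (hg : ContDiff ℝ 1 g) (hΔ : ContDiff ℝ 1 Δ)
    (hxa : ContDiff ℝ 1 xa) (hxp : ContDiff ℝ 1 xp)
    (hT : ContDiffAt ℝ 1 T 0) (hT0 : T 0 = τ)
    (hevent : ∀ᶠ ε in 𝓝 (0 : ℝ), g (xa (ε, T ε), T ε) = 0)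
    (hreset : ∀ᶠ ε in 𝓝 (0 : ℝ),
      xp (ε, T ε) = xa (ε, T ε) + Δ (xa (ε, T ε), T ε))
    -- the nominal velocities before and after the event
    (fm fp : Fin n → ℝ)
    (hfm : fm = fderiv ℝ xa (0, τ) (0, 1))
    (hfp : fp = fderiv ℝ xp (0, τ) (0, 1))
    -- partial derivatives of the guard and the impulse map at (αᵃ(τ), τ)
    (D1g : (Fin n → ℝ) →L[ℝ] ℝ) (hD1g : D1g = fderiv ℝ (fun y => g (y, τ)) (xa (0, τ)))
    (D2g : ℝ) (hD2g : D2g = deriv (fun s => g (xa (0, τ), s)) τ)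
    (D1Δ : (Fin n → ℝ) →L[ℝ] (Fin n → ℝ))
    (hD1Δ : D1Δ = fderiv ℝ (fun y => Δ (y, τ)) (xa (0, τ)))
    (D2Δ : Fin n → ℝ) (hD2Δ : D2Δ = deriv (fun s => Δ (xa (0, τ), s)) τ)
    -- total time derivatives ġ⁻ and Δ̇⁻ along the nominal trajectory
    (gdot : ℝ) (hgdot : gdot = D1g fm + D2g)
    (Δdot : Fin n → ℝ) (hΔdot : Δdot = D1Δ fm + D2Δ)
    -- transversality
    (htrans : gdot ≠ 0)
    -- the jump gain
    (H : (Fin n → ℝ) →L[ℝ] (Fin n → ℝ))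
    (hH : H = gdot⁻¹ • D1g.smulRight (fp - fm - Δdot) + D1Δ) :
    fderiv ℝ xp (0, τ) (1, 0) =
      fderiv ℝ xa (0, τ) (1, 0) + H (fderiv ℝ xa (0, τ) (1, 0)) := by
  subst hT0
  set T' := deriv T 0
  set za := fderiv ℝ xa (0, T 0) (1, 0)
  have hTd : HasDerivAt T T' 0 := (hT.differentiableAt one_ne_zero).hasDerivAt
  have hcurve (x : ℝ × ℝ → Fin n → ℝ) (hx : ContDiff ℝ 1 x) :
      HasDerivAt (fun ε => x (ε, T ε))
        (fderiv ℝ x (0, T 0) (1, 0) + T' • fderiv ℝ x (0, T 0) (0, 1)) 0 := by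
    rw [← ContinuousLinearMap.apply_prod_eq_add_smul]
    exact (hx.differentiable one_ne_zero _).hasDerivAt_comp_prodMk (hasDerivAt_id' 0) hTd
  have hxa' : HasDerivAt (fun ε => xa (ε, T ε)) (za + T' • fm) 0 := hfm ▸ hcurve xa hxa
  have hxp' := hfp ▸ hcurve xp hxp
  have hg' : HasDerivAt (fun ε => g (xa (ε, T ε), T ε)) (D1g (za + T' • fm) + T' • D2g) 0 := by
    rw [hD1g, hD2g, ← (hg.differentiable one_ne_zero _).fderiv_apply_eq_partials]
    exact (hg.differentiable one_ne_zero _).hasDerivAt_comp_prodMk hxa' hTd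
  have hΔ' : HasDerivAt (fun ε => Δ (xa (ε, T ε), T ε)) (D1Δ (za + T' • fm) + T' • D2Δ) 0 := by
    rw [hD1Δ, hD2Δ, ← (hΔ.differentiable one_ne_zero _).fderiv_apply_eq_partials]
    exact (hΔ.differentiable one_ne_zero _).hasDerivAt_comp_prodMk hxa' hTd
  have hguard : D1g za + T' * gdot = 0 := by
    have h := hg'.unique ((hasDerivAt_const 0 0).congr_of_eventuallyEq hevent)
    simp only [map_add, map_smul, smul_eq_mul] at h
    rw [hgdot]
    linear_combination h
  have hjump : fderiv ℝ xp (0, T 0) (1, 0) + T' • fp = za + T' • fm + D1Δ za + T' • Δdot := by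
    rw [hxp'.unique ((hxa'.add hΔ').congr_of_eventuallyEq hreset), hΔdot, map_add, map_smul]
    module
  rw [hH]
  simpa using eq_add_jump_of_guard_of_reset htrans hguard hjump
end

section
/- Jump-LQR lower bound via the Riccati equation with jump reset: Let t₀ < τ < T, let Aᵃ, Aᵖ : [t₀,T] → ℝ^{n×n}, Bᵃ, Bᵖ : [t₀,T] → ℝ^{n×m}, Q : [t₀,T] → ℝ^{n×n} symmetric positive definite, R : [t₀,T] → ℝ^{m×m} symmetric positive definite, all continuous, let H ∈ ℝ^{n×n} and let P_T be symmetric. Let Pᵖ : [τ,T] → ℝ^{n×n} be a continuously differentiable symmetric solution of −Ṗᵖ = (Aᵖ)ᵀ Pᵖ + Pᵖ Aᵖ − Pᵖ Bᵖ R⁻¹ (Bᵖ)ᵀ Pᵖ + Q with Pᵖ(T) = P_T, and let Pᵃ : [t₀,τ] → ℝ^{n×n} be a continuously differentiable symmetric solution of −Ṗᵃ = (Aᵃ)ᵀ Pᵃ + Pᵃ Aᵃ − Pᵃ Bᵃ R⁻¹ (Bᵃ)ᵀ Pᵃ + Q with terminal condition Pᵃ(τ) = (I + H)ᵀ Pᵖ(τ)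 (I + H). Let v : [t₀,T] → ℝ^m be continuous and let z satisfy z(t₀) = z₀, ż = Aᵃ z + Bᵃ v on [t₀,τ], the jump z(τ⁺) = (I + H) z(τ⁻) at t = τ, and ż = Aᵖ z + Bᵖ v on [τ,T]. Then ½ ∫_{t₀}^{T} ( z(s)ᵀ Q(s) z(s) + v(s)ᵀ R(s) v(s) ) ds + ½ z(T)ᵀ P_T z(T) ≥ ½ z₀ᵀ Pᵃ(t₀) z₀. -/
/-!
Along the trajectory, `W(t) = z(t)ᵀ P(t) z(t)` satisfies, by the Riccati equation and completing
the square, `Ẇ = (v + Kz)ᵀ R (v + Kz) - (zᵀQz + vᵀRv)` with `K = R⁻¹BᵀP`. Since `R ≥ 0`,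
`-W` grows at most as fast as the running cost, so on each of `[t₀, τ]` and `[τ, T]` the value
at the left end is at most the cost plus the value at the right end. The reset
`Pᵃ(τ) = (I + H)ᵀ Pᵖ(τ) (I + H)` makes the two values at `τ` agree, and the two bounds chain.
-/

open Set Matrix

theorem Matrix.mulVec_dotProduct {α ι κ : Type*} [CommSemiring α] [Fintype ι] [Fintype κ]
    (M : Matrix κ ι α) (x : ι → α) (y : κ → α) : M *ᵥ x ⬝ᵥ y = x ⬝ᵥ Mᵀ *ᵥ y := by
  rw [dotProduct_transpose_mulVec, dotProduct_comm]

section Calculus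

variable {𝕜 ι κ : Type*} [NontriviallyNormedField 𝕜] [Fintype ι] {t : 𝕜}

theorem HasDerivAt.dotProduct {x y : 𝕜 → ι → 𝕜} {x' y' : ι → 𝕜}
    (hx : HasDerivAt x x' t) (hy : HasDerivAt y y' t) :
    HasDerivAt (fun s => x s ⬝ᵥ y s) (x' ⬝ᵥ y t + x t ⬝ᵥ y') t := by
  show HasDerivAt (fun s => ∑ i, x s i * y s i) (∑ i, x' i * y t i + ∑ i, x t i * y' i) t
  rw [← Finset.sum_add_distrib]
  exact HasDerivAt.fun_sum fun i _ => (hasDerivAt_pi.1 hx i).mul (hasDerivAt_pi.1 hy i)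

theorem hasDerivAt_mulVec {M : 𝕜 → Matrix κ ι 𝕜} {M' : Matrix κ ι 𝕜} {y : 𝕜 → ι → 𝕜}
    {y' : ι → 𝕜} (hM : ∀ i j, HasDerivAt (fun s => M s i j) (M' i j) t)
    (hy : HasDerivAt y y' t) :
    HasDerivAt (fun s => M s *ᵥ y s) (M' *ᵥ y t + M t *ᵥ y') t :=
  hasDerivAt_pi.2 fun i => (hasDerivAt_pi.2 (hM i)).dotProduct hy

end Calculus

theorem ContinuousOn.dotProduct_mulVec {X α ι κ : Type*} [TopologicalSpace X]
    [TopologicalSpace α] [NonUnitalNonAssocSemiring α] [IsTopologicalSemiring α]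
    [Fintype ι] [Fintype κ] {s : Set X} {x : X → κ → α} {M : X → Matrix κ ι α} {y : X → ι → α}
    (hx : ContinuousOn x s) (hM : ContinuousOn M s) (hy : ContinuousOn y s) :
    ContinuousOn (fun t => x t ⬝ᵥ M t *ᵥ y t) s :=
  (continuous_fst.dotProduct (continuous_snd.fst.matrix_mulVec continuous_snd.snd)).comp_continuousOn
    (hx.prodMk (hM.prodMk hy))

theorem riccati_completing_square {α ι κ : Type*} [CommRing α] [Fintype ι] [Fintype κ]
    [DecidableEq κ] {A P P' Q : Matrix ι ι α} {B : Matrix ι κ α} {R : Matrix κ κ α}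
    (hP : Pᵀ = P) (hR : Rᵀ = R) (hRinv : R * R⁻¹ = 1)
    (hRic : -P' = Aᵀ * P + P * A - P * B * R⁻¹ * Bᵀ * P + Q) (z : ι → α) (v : κ → α) :
    (A *ᵥ z + B *ᵥ v) ⬝ᵥ P *ᵥ z + z ⬝ᵥ (P' *ᵥ z + P *ᵥ (A *ᵥ z + B *ᵥ v))
      = (v + (R⁻¹ * Bᵀ * P) *ᵥ z) ⬝ᵥ R *ᵥ (v + (R⁻¹ * Bᵀ * P) *ᵥ z)
        - (z ⬝ᵥ Q *ᵥ z + v ⬝ᵥ R *ᵥ v) := by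
  set K := R⁻¹ * Bᵀ * P
  have hRK : R * K = Bᵀ * P := by
    rw [← Matrix.mul_assoc, ← Matrix.mul_assoc, hRinv, Matrix.one_mul]
  have hKR : Kᵀ * R = P * B := by
    rw [← hR, ← transpose_mul, hRK, transpose_mul, hP, transpose_transpose]
  have hKRK : Kᵀ * (Bᵀ * P) = P * B * R⁻¹ * Bᵀ * P := by
    rw [← hRK, ← Matrix.mul_assoc, hKR]
    simp only [K, Matrix.mul_assoc]
  have hPB : z ⬝ᵥ (P * B) *ᵥ v = v ⬝ᵥ (Bᵀ * P) *ᵥ z := by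
    rw [dotProduct_comm, mulVec_dotProduct, transpose_mul, hP]
  have hquad : z ⬝ᵥ (Aᵀ * P) *ᵥ z + z ⬝ᵥ P' *ᵥ z + z ⬝ᵥ (P * A) *ᵥ z
      = z ⬝ᵥ (P * B * R⁻¹ * Bᵀ * P) *ᵥ z - z ⬝ᵥ Q *ᵥ z := by
    have hP' : Aᵀ * P + P' + P * A = P * B * R⁻¹ * Bᵀ * P - Q := by
      rw [← neg_neg P', hRic]
      abel
    rw [← dotProduct_add, ← dotProduct_add, ← add_mulVec, ← add_mulVec, hP', sub_mulVec,
      dotProduct_sub]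
  simp only [mulVec_add, dotProduct_add, add_dotProduct, mulVec_dotProduct, mulVec_mulVec,
    hRK, hKR, hKRK, hPB]
  linear_combination hquad

theorem riccati_quadForm_le_cost_add_quadForm {ι κ : Type*} [Fintype ι] [Fintype κ]
    [DecidableEq κ] {a b : ℝ} (hab : a ≤ b) {A P P' Q : ℝ → Matrix ι ι ℝ}
    {B : ℝ → Matrix ι κ ℝ} {R : ℝ → Matrix κ κ ℝ} {z : ℝ → ι → ℝ} {v : ℝ → κ → ℝ}
    (hQ : ContinuousOn Q (Icc a b)) (hRc : ContinuousOn R (Icc a b))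
    (hR : ∀ t ∈ Icc a b, (R t).PosDef) (hPsymm : ∀ t ∈ Icc a b, (P t)ᵀ = P t)
    (hP' : ∀ t ∈ Icc a b, ∀ i j, HasDerivAt (fun s => P s i j) (P' t i j) t)
    (hRic : ∀ t ∈ Icc a b,
      -P' t = (A t)ᵀ * P t + P t * A t - P t * B t * (R t)⁻¹ * (B t)ᵀ * P t + Q t)
    (hv : ContinuousOn v (Icc a b))
    (hz : ∀ t ∈ Icc a b, HasDerivAt z (A t *ᵥ z t + B t *ᵥ v t) t) :
    z a ⬝ᵥ P a *ᵥ z a ≤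
      (∫ s in a..b, (z s ⬝ᵥ Q s *ᵥ z s + v s ⬝ᵥ R s *ᵥ v s)) + z b ⬝ᵥ P b *ᵥ z b := by
  set W := fun t => z t ⬝ᵥ P t *ᵥ z t
  set cost := fun t => z t ⬝ᵥ Q t *ᵥ z t + v t ⬝ᵥ R t *ᵥ v t
  set u := fun t => v t + ((R t)⁻¹ * (B t)ᵀ * P t) *ᵥ z t
  have hW : ∀ t ∈ Icc a b, HasDerivAt W (u t ⬝ᵥ R t *ᵥ u t - cost t) t := by
    intro t ht
    have hRt := hR t ht
    rw [← riccati_completing_square (hPsymm t ht) (isHermitian_iff_isSymm.1 hRt.isHermitian).eq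
      (mul_nonsing_inv _ ((isUnit_iff_isUnit_det _).1 hRt.isUnit)) (hRic t ht)]
    exact (hz t ht).dotProduct (hasDerivAt_mulVec (hP' t ht) (hz t ht))
  have hzc : ContinuousOn z (Icc a b) := fun t ht =>
    (hz t ht).continuousAt.continuousWithinAt
  have hcost : ContinuousOn cost (Icc a b) :=
    (hzc.dotProduct_mulVec hQ hzc).add (hv.dotProduct_mulVec hRc hv)
  have hu : ∀ t ∈ Icc a b, 0 ≤ u t ⬝ᵥ R t *ᵥ u t := fun t ht => by
    simpa only [star_trivial] using (hR t ht).posSemidef.dotProduct_mulVec_nonneg (u t)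
  -- The one-sided FTC needs only the cost to be integrable, not the completed square.
  have hdecay := intervalIntegral.sub_le_integral_of_hasDeriv_right_of_le (g := fun t => -W t) hab
    (fun t ht => (hW t ht).continuousAt.neg.continuousWithinAt)
    (fun t ht => (hW t (Ioo_subset_Icc_self ht)).neg.hasDerivWithinAt)
    hcost.integrableOn_Icc
    (fun t ht => by linarith [hu t (Ioo_subset_Icc_self ht)])
  simp only [W] at hdecay
  linarith

theorem jump_lqr_lower_bound_general
    (n m : ℕ) (t₀ τ tf : ℝ) (h0τ : t₀ < τ) (hτf : τ < tf)
    (Aa Ap Q : ℝ → Matrix (Fin n) (Fin n) ℝ)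
    (Ba Bp : ℝ → Matrix (Fin n) (Fin m) ℝ)
    (R : ℝ → Matrix (Fin m) (Fin m) ℝ)
    (H P_T : Matrix (Fin n) (Fin n) ℝ)
    (hQc : ∀ i j, ContinuousOn (fun t => Q t i j) (Icc t₀ tf))
    (hRc : ∀ i j, ContinuousOn (fun t => R t i j) (Icc t₀ tf))
    (hR : ∀ t ∈ Icc t₀ tf, (R t).PosDef)
    -- Riccati solution on the post-event interval [τ, T]
    (Pp Pp' : ℝ → Matrix (Fin n) (Fin n) ℝ)
    (hPpsym : ∀ t ∈ Icc τ tf, (Pp t)ᵀ = Pp t)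
    (hPp' : ∀ t ∈ Icc τ tf, ∀ i j, HasDerivAt (fun s => Pp s i j) (Pp' t i j) t)
    (hRicp : ∀ t ∈ Icc τ tf,
      -Pp' t = (Ap t)ᵀ * Pp t + Pp t * Ap t
        - Pp t * Bp t * (R t)⁻¹ * (Bp t)ᵀ * Pp t + Q t)
    (hPpT : Pp tf = P_T)
    -- Riccati solution on the ante-event interval [t₀, τ], with jump reset
    (Pa Pa' : ℝ → Matrix (Fin n) (Fin n) ℝ)
    (hPasym : ∀ t ∈ Icc t₀ τ, (Pa t)ᵀ = Pa t)
    (hPa' : ∀ t ∈ Icc t₀ τ, ∀ i j, HasDerivAt (fun s => Pa s i j) (Pa' t i j) t)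
    (hRica : ∀ t ∈ Icc t₀ τ,
      -Pa' t = (Aa t)ᵀ * Pa t + Pa t * Aa t
        - Pa t * Ba t * (R t)⁻¹ * (Ba t)ᵀ * Pa t + Q t)
    (hPaτ : Pa τ = (1 + H)ᵀ * Pp τ * (1 + H))
    -- the control and the corresponding jumping trajectory
    (z₀ : Fin n → ℝ) (za zp : ℝ → Fin n → ℝ) (v : ℝ → Fin m → ℝ)
    (hv : ContinuousOn v (Icc t₀ tf))
    (hz0 : za t₀ = z₀)
    (hza : ∀ t ∈ Icc t₀ τ,
      HasDerivAt za ((Aa t).mulVec (za t) + (Ba t).mulVec (v t)) t)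
    (hjump : zp τ = (1 + H).mulVec (za τ))
    (hzp : ∀ t ∈ Icc τ tf,
      HasDerivAt zp ((Ap t).mulVec (zp t) + (Bp t).mulVec (v t)) t) :
    (1 / 2) *
        ((∫ s in t₀..τ, (za s ⬝ᵥ (Q s).mulVec (za s) + v s ⬝ᵥ (R s).mulVec (v s)))
          + ∫ s in τ..tf, (zp s ⬝ᵥ (Q s).mulVec (zp s) + v s ⬝ᵥ (R s).mulVec (v s)))
        + (1 / 2) * (zp tf ⬝ᵥ P_T.mulVec (zp tf))
      ≥ (1 / 2) * (z₀ ⬝ᵥ (Pa t₀).mulVec z₀) := by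
  have hsub_a : Icc t₀ τ ⊆ Icc t₀ tf := Icc_subset_Icc_right hτf.le
  have hsub_p : Icc τ tf ⊆ Icc t₀ tf := Icc_subset_Icc_left h0τ.le
  have hQm : ContinuousOn Q (Icc t₀ tf) := continuousOn_pi.2 fun i => continuousOn_pi.2 (hQc i)
  have hRm : ContinuousOn R (Icc t₀ tf) := continuousOn_pi.2 fun i => continuousOn_pi.2 (hRc i)
  have h_ante := riccati_quadForm_le_cost_add_quadForm h0τ.le (hQm.mono hsub_a) (hRm.mono hsub_a)
    (fun t ht => hR t (hsub_a ht)) hPasym hPa' hRica (hv.mono hsub_a) hza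
  have h_post := riccati_quadForm_le_cost_add_quadForm hτf.le (hQm.mono hsub_p) (hRm.mono hsub_p)
    (fun t ht => hR t (hsub_p ht)) hPpsym hPp' hRicp (hv.mono hsub_p) hzp
  have h_reset : za τ ⬝ᵥ Pa τ *ᵥ za τ = zp τ ⬝ᵥ Pp τ *ᵥ zp τ := by
    rw [hPaτ, hjump, mulVec_dotProduct, mulVec_mulVec, mulVec_mulVec, Matrix.mul_assoc]
  rw [hz0] at h_ante
  rw [hPpT] at h_post
  linarith

/-- Jump-LQR lower bound via the Riccati equation with jump reset: for the
jump linear dynamics `ż = Aᵃz + Bᵃv` on `[t₀,τ]`, `z⁺ = (I + H) z⁻` at `τ`,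
`ż = Aᵖz + Bᵖv` on `[τ,T]` (trajectory represented by its ante- and post-event
pieces `za` and `zp`), the cost of any continuous control is bounded below by
`½ z₀ᵀ Pᵃ(t₀) z₀`, where `Pᵖ`, `Pᵃ` solve the respective Riccati equations with
`Pᵖ(T) = P_T` and the reset `Pᵃ(τ) = (I + H)ᵀ Pᵖ(τ) (I + H)`. -/
theorem jump_lqr_lower_bound
    (n m : ℕ) (t₀ τ tf : ℝ) (h0τ : t₀ < τ) (hτf : τ < tf)
    (Aa Ap Q : ℝ → Matrix (Fin n) (Fin n) ℝ)
    (Ba Bp : ℝ → Matrix (Fin n) (Fin m) ℝ)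
    (R : ℝ → Matrix (Fin m) (Fin m) ℝ)
    (H P_T : Matrix (Fin n) (Fin n) ℝ) (hPT : P_Tᵀ = P_T)
    (hAa : ∀ i j, ContinuousOn (fun t => Aa t i j) (Icc t₀ tf))
    (hAp : ∀ i j, ContinuousOn (fun t => Ap t i j) (Icc t₀ tf))
    (hBa : ∀ i j, ContinuousOn (fun t => Ba t i j) (Icc t₀ tf))
    (hBp : ∀ i j, ContinuousOn (fun t => Bp t i j) (Icc t₀ tf))
    (hQc : ∀ i j, ContinuousOn (fun t => Q t i j) (Icc t₀ tf))
    (hRc : ∀ i j, ContinuousOn (fun t => R t i j) (Icc t₀ tf))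
    (hQ : ∀ t ∈ Icc t₀ tf, (Q t).PosDef)
    (hR : ∀ t ∈ Icc t₀ tf, (R t).PosDef)
    -- Riccati solution on the post-event interval [τ, T]
    (Pp Pp' : ℝ → Matrix (Fin n) (Fin n) ℝ)
    (hPpsym : ∀ t ∈ Icc τ tf, (Pp t)ᵀ = Pp t)
    (hPp' : ∀ t ∈ Icc τ tf, ∀ i j, HasDerivAt (fun s => Pp s i j) (Pp' t i j) t)
    (hRicp : ∀ t ∈ Icc τ tf,
      -Pp' t = (Ap t)ᵀ * Pp t + Pp t * Ap t
        - Pp t * Bp t * (R t)⁻¹ * (Bp t)ᵀ * Pp t + Q t)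
    (hPpT : Pp tf = P_T)
    -- Riccati solution on the ante-event interval [t₀, τ], with jump reset
    (Pa Pa' : ℝ → Matrix (Fin n) (Fin n) ℝ)
    (hPasym : ∀ t ∈ Icc t₀ τ, (Pa t)ᵀ = Pa t)
    (hPa' : ∀ t ∈ Icc t₀ τ, ∀ i j, HasDerivAt (fun s => Pa s i j) (Pa' t i j) t)
    (hRica : ∀ t ∈ Icc t₀ τ,
      -Pa' t = (Aa t)ᵀ * Pa t + Pa t * Aa t
        - Pa t * Ba t * (R t)⁻¹ * (Ba t)ᵀ * Pa t + Q t)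
    (hPaτ : Pa τ = (1 + H)ᵀ * Pp τ * (1 + H))
    -- the control and the corresponding jumping trajectory
    (z₀ : Fin n → ℝ) (za zp : ℝ → Fin n → ℝ) (v : ℝ → Fin m → ℝ)
    (hv : ContinuousOn v (Icc t₀ tf))
    (hz0 : za t₀ = z₀)
    (hza : ∀ t ∈ Icc t₀ τ,
      HasDerivAt za ((Aa t).mulVec (za t) + (Ba t).mulVec (v t)) t)
    (hjump : zp τ = (1 + H).mulVec (za τ))
    (hzp : ∀ t ∈ Icc τ tf,
      HasDerivAt zp ((Ap t).mulVec (zp t) + (Bp t).mulVec (v t)) t) :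
    (1 / 2) *
        ((∫ s in t₀..τ, (za s ⬝ᵥ (Q s).mulVec (za s) + v s ⬝ᵥ (R s).mulVec (v s)))
          + ∫ s in τ..tf, (zp s ⬝ᵥ (Q s).mulVec (zp s) + v s ⬝ᵥ (R s).mulVec (v s)))
        + (1 / 2) * (zp tf ⬝ᵥ P_T.mulVec (zp tf))
      ≥ (1 / 2) * (z₀ ⬝ᵥ (Pa t₀).mulVec z₀) :=
  jump_lqr_lower_bound_general n m t₀ τ tf h0τ hτf Aa Ap Q Ba Bp R H P_T hQc hRc hR Pp Pp' hPpsym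
    hPp' hRicp hPpT Pa Pa' hPasym hPa' hRica hPaτ z₀ za zp v hv hz0 hza hjump hzp
end
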